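/- arXiv:1504.07875 — 6 statements merged into one kernel-verified Lean document; each statement's English description precedes it below -/
import Mathlib

section
/- Let p1, p2, q1, q2 be positive integers with p1 ≥ 2, p2 ≥ 2, p1 < q1, gcd(p1,q1) = 1 and gcd(p2,q2) = 1. Let Γ be the additive submonoid of ℕ generated by g0 = p1·p2, g1 = q1·p2 and g2 = p1·p2·q1 + q2. Then the complement ℕ \ Γ is finite and its cardinality equals δ = (p1·q1·p2² + p2·q2 − p1·p2 − q1·p2 − q2 + 1)/2. -/
/-!
Semigroups are taken as additive submonoids of `ℤ`, so that negative integers count as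
non-members. If `d > 0` and `g` are coprime, every integer is uniquely `c * g + d * m` with
`0 ≤ c < d`; hence in the gluing `ℕ g + d • S` of a submonoid `S ∋ g`, the element
`c * g + d * m` lies in the gluing iff `m ∈ S`. Since `F - (c * g + d * m)` has standard
form `(d - 1 - c) * g + d * (F' - m)` for `F = (d - 1) * g + d * F'`, gluing turns a semigroup
symmetric about `F'` (`m ∈ S ↔ F' - m ∉ S`) into one symmetric about `F`.

`Γ` arises from `ℕ` (symmetric about `-1`) by gluing twice: `⟨p1, q1⟩ = ℕ q1 + p1 • ℕ`, then
`Γ = ℕ g2 + p2 • ⟨p1, q1⟩`, where `g2 ∈ ⟨p1, q1⟩` because `g2` exceeds its Frobenius number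
`p1 q1 - p1 - q1`. Finally, for a semigroup symmetric about `F`, `n ↦ F - n` exchanges the gaps
and the elements in `[0, F]`, so there are exactly `(F + 1) / 2` gaps.
-/

theorem Int.exists_add_mul_of_isCoprime {d g : ℤ} (hd : 0 < d) (hdg : IsCoprime d g) (n : ℤ) :
    ∃ c m : ℤ, 0 ≤ c ∧ c < d ∧ n = c * g + d * m := by
  obtain ⟨u, v, huv⟩ := hdg
  refine ⟨n * v % d, g * (n * v / d) + n * u, Int.emod_nonneg _ hd.ne',
    Int.emod_lt_of_pos _ hd, ?_⟩
  linear_combination (-n) * huv - g * Int.mul_ediv_add_emod (n * v) d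

theorem Int.eq_and_eq_of_add_mul_eq_add_mul {d g c c' m m' : ℤ} (hdg : IsCoprime d g)
    (hc : 0 ≤ c) (hcd : c < d) (hc' : 0 ≤ c') (hc'd : c' < d)
    (h : c * g + d * m = c' * g + d * m') : c = c' ∧ m = m' := by
  have hdvd : d ∣ (c - c') * g := ⟨m' - m, by linear_combination h⟩
  have hcc' : c - c' = 0 :=
    Int.eq_zero_of_abs_lt_dvd (hdg.dvd_of_dvd_mul_right hdvd) (by rw [abs_lt]; omega)
  obtain rfl : c = c' := by omega
  exact ⟨rfl, mul_left_cancel₀ (show d ≠ 0 by omega) (by linarith)⟩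

theorem AddSubmonoid.mem_closure_triple {A : Type*} [AddCommMonoid A] (a b c x : A) :
    x ∈ closure ({a, b, c} : Set A) ↔ ∃ k l m : ℕ, k • a + l • b + m • c = x := by
  rw [← Set.singleton_union, closure_union, mem_sup]
  simp only [mem_closure_singleton, mem_closure_pair, exists_exists_eq_and]
  constructor
  · rintro ⟨k, _, ⟨l, m, rfl⟩, rfl⟩
    exact ⟨k, l, m, add_assoc _ _ _⟩
  · rintro ⟨k, l, m, rfl⟩
    exact ⟨k, _, ⟨l, m, rfl⟩, (add_assoc _ _ _).symm⟩

namespace AddSubmonoid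

def gluing (d g : ℤ) (S : AddSubmonoid ℤ) : AddSubmonoid ℤ where
  carrier := {n | ∃ z : ℕ, ∃ m ∈ S, n = z * g + d * m}
  add_mem' := by
    rintro _ _ ⟨z, m, hm, rfl⟩ ⟨z', m', hm', rfl⟩
    exact ⟨z + z', m + m', S.add_mem hm hm', by push_cast; ring⟩
  zero_mem' := ⟨0, 0, S.zero_mem, by simp⟩

def IsSymmetricAbout (S : AddSubmonoid ℤ) (F : ℤ) : Prop :=
  ∀ n, n ∈ S ↔ F - n ∉ S

variable {d g F : ℤ} {S : AddSubmonoid ℤ}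

theorem add_mul_mem_gluing_iff (hd : 0 < d) (hdg : IsCoprime d g) (hg : g ∈ S) {c m : ℤ}
    (hc : 0 ≤ c) (hcd : c < d) : c * g + d * m ∈ gluing d g S ↔ m ∈ S := by
  refine ⟨?_, fun hm => ⟨c.toNat, m, hm, by rw [Int.toNat_of_nonneg hc]⟩⟩
  rintro ⟨z, m', hm', h⟩
  have hk : 0 ≤ (z : ℤ) / d := Int.ediv_nonneg z.cast_nonneg hd.le
  lift (z : ℤ) / d to ℕ using hk with k hkz
  have hz := Int.mul_ediv_add_emod z d
  rw [← hkz] at hz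
  have h' : c * g + d * m = (z % d) * g + d * (m' + k * g) := by
    rw [h]; linear_combination (-g) * hz
  obtain ⟨-, rfl⟩ := Int.eq_and_eq_of_add_mul_eq_add_mul hdg hc hcd
    (Int.emod_nonneg _ hd.ne') (Int.emod_lt_of_pos _ hd) h'
  exact S.add_mem hm' (by simpa only [nsmul_eq_mul] using S.nsmul_mem hg k)

theorem gluing_le_nonneg (hd : 0 ≤ d) (hg : 0 ≤ g)
    (hS : S ≤ (Subsemiring.nonneg ℤ).toAddSubmonoid) :
    gluing d g S ≤ (Subsemiring.nonneg ℤ).toAddSubmonoid := by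
  rintro _ ⟨z, m, hm, rfl⟩
  have hm : 0 ≤ m := hS hm
  simp only [Subsemiring.mem_toAddSubmonoid, Subsemiring.mem_nonneg]
  positivity

theorem isSymmetricAbout_nonneg :
    (Subsemiring.nonneg ℤ).toAddSubmonoid.IsSymmetricAbout (-1) := by
  intro n
  simp only [Subsemiring.mem_toAddSubmonoid, Subsemiring.mem_nonneg]
  omega

theorem IsSymmetricAbout.gluing (hS : S.IsSymmetricAbout F) (hd : 0 < d) (hdg : IsCoprime d g)
    (hg : g ∈ S) : (gluing d g S).IsSymmetricAbout ((d - 1) * g + d * F) := by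
  intro n
  obtain ⟨c, m, hc, hcd, rfl⟩ := Int.exists_add_mul_of_isCoprime hd hdg n
  rw [show (d - 1) * g + d * F - (c * g + d * m) = (d - 1 - c) * g + d * (F - m) by ring,
    add_mul_mem_gluing_iff hd hdg hg hc hcd, add_mul_mem_gluing_iff hd hdg hg (by omega) (by omega)]
  exact hS m

theorem IsSymmetricAbout.mem_of_lt (hS : S.IsSymmetricAbout F)
    (hpos : S ≤ (Subsemiring.nonneg ℤ).toAddSubmonoid) {n : ℤ} (hn : F < n) : n ∈ S :=
  (hS n).2 fun h => by have : 0 ≤ F - n := hpos h; omega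

open Finset in
theorem IsSymmetricAbout.finite_and_two_mul_ncard_gaps (hS : S.IsSymmetricAbout F)
    (hpos : S ≤ (Subsemiring.nonneg ℤ).toAddSubmonoid) :
    {n : ℕ | (n : ℤ) ∉ S}.Finite ∧ 2 * ({n : ℕ | (n : ℤ) ∉ S}.ncard : ℤ) = F + 1 := by
  classical
  have hF : 0 ≤ F + 1 := hpos (hS.mem_of_lt hpos (lt_add_one F))
  obtain ⟨N, hN⟩ : ∃ N : ℕ, (N : ℤ) = F + 1 := ⟨(F + 1).toNat, Int.toNat_of_nonneg hF⟩
  have hgaps : {n : ℕ | (n : ℤ) ∉ S} = ↑((range N).filter fun n : ℕ => (n : ℤ) ∉ S) := by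
    ext n
    simp only [Set.mem_ofPred_eq, coe_filter, mem_range, iff_and_self]
    exact fun hn => by_contra fun hnN => hn (hS.mem_of_lt hpos (by omega))
  have hreflect : #((range N).filter fun n : ℕ => (n : ℤ) ∉ S) =
      #((range N).filter fun n : ℕ => (n : ℤ) ∈ S) := by
    rw [card_filter, card_filter, ← sum_range_reflect]
    refine sum_congr rfl fun n hn => ?_
    have hn : n < N := mem_range.1 hn
    rw [hS, show F - ((N - 1 - n : ℕ) : ℤ) = n by omega]
    simp only [not_not]
  rw [hgaps, Set.ncard_coe_finset]
  refine ⟨finite_toSet _, ?_⟩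
  have := card_filter_add_card_filter_not (s := range N) (fun n => (n : ℤ) ∈ S)
  rw [card_range] at this
  omega

theorem natCast_mem_gluing_gluing_iff (a b d g n : ℕ) :
    (n : ℤ) ∈ gluing d g (gluing a b (Subsemiring.nonneg ℤ).toAddSubmonoid) ↔
      n ∈ closure ({a * d, b * d, g} : Set ℕ) := by
  rw [mem_closure_triple]
  constructor
  · rintro ⟨z, _, ⟨y, x, hx, rfl⟩, h⟩
    lift x to ℕ using hx
    refine ⟨x, y, z, ?_⟩
    simp only [smul_eq_mul]
    exact_mod_cast (by linear_combination -h : (x * (a * d) + y * (b * d) + z * g : ℤ) = n)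
  · rintro ⟨x, y, z, rfl⟩
    refine ⟨z, y * b + a * x, ⟨y, x, by simp, rfl⟩, ?_⟩
    simp only [smul_eq_mul]
    push_cast
    ring

end AddSubmonoid

theorem delta_invariant_of_two_newton_pairs_general
    (p1 q1 p2 q2 : ℕ) (hp1 : 2 ≤ p1) (hp2 : 2 ≤ p2)
    (hgcd1 : Nat.gcd p1 q1 = 1) (hgcd2 : Nat.gcd p2 q2 = 1) :
    {n : ℕ | n ∉ AddSubmonoid.closure ({p1 * p2, q1 * p2, p1 * p2 * q1 + q2} : Set ℕ)}.Finite ∧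
    {n : ℕ | n ∉ AddSubmonoid.closure ({p1 * p2, q1 * p2, p1 * p2 * q1 + q2} : Set ℕ)}.ncard =
      (p1 * q1 * p2 ^ 2 + p2 * q2 - p1 * p2 - q1 * p2 - q2 + 1) / 2 := by
  have hΓ₁ : (AddSubmonoid.gluing p1 q1 (Subsemiring.nonneg ℤ).toAddSubmonoid).IsSymmetricAbout
      ((p1 - 1) * q1 + p1 * (-1)) :=
    AddSubmonoid.isSymmetricAbout_nonneg.gluing (by omega) (Nat.isCoprime_iff_coprime.2 hgcd1)
      (by simp)
  have hΓ₁_le : AddSubmonoid.gluing p1 q1 (Subsemiring.nonneg ℤ).toAddSubmonoid ≤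
      (Subsemiring.nonneg ℤ).toAddSubmonoid :=
    AddSubmonoid.gluing_le_nonneg (by positivity) (by positivity) le_rfl
  have hg2 : ((p1 * p2 * q1 + q2 : ℕ) : ℤ) ∈ AddSubmonoid.gluing p1 q1 _ :=
    hΓ₁.mem_of_lt hΓ₁_le <| by
      push_cast
      nlinarith [mul_nonneg (mul_nonneg p1.cast_nonneg q1.cast_nonneg)
        (by omega : (0 : ℤ) ≤ p2 - 1)]
  have hcop : IsCoprime (p2 : ℤ) ((p1 * p2 * q1 + q2 : ℕ) : ℤ) := by
    rw [show ((p1 * p2 * q1 + q2 : ℕ) : ℤ) = q2 + p2 * (p1 * q1) by push_cast; ring]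
    exact (Nat.isCoprime_iff_coprime.2 hgcd2).add_mul_left_right _
  obtain ⟨hfin, hcard⟩ := (hΓ₁.gluing (by omega) hcop hg2).finite_and_two_mul_ncard_gaps
    (AddSubmonoid.gluing_le_nonneg (by positivity) (by positivity) hΓ₁_le)
  simp only [← AddSubmonoid.natCast_mem_gluing_gluing_iff]
  refine ⟨hfin, ?_⟩
  generalize Set.ncard _ = k at hcard ⊢
  have : 2 * k + p1 * p2 + q1 * p2 + q2 = p1 * q1 * p2 ^ 2 + p2 * q2 + 1 := by
    push_cast at hcard
    zify
    linear_combination hcard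
  omega

/-- For a plane curve singularity with two Newton pairs `(p1,q1)(p2,q2)`, the complement of
its semigroup `Γ = ⟨p1·p2, q1·p2, p1·p2·q1 + q2⟩` in `ℕ` is finite, with cardinality equal to
the delta invariant `δ = (p1·q1·p2² + p2·q2 − p1·p2 − q1·p2 − q2 + 1)/2`. -/
theorem delta_invariant_of_two_newton_pairs
    (p1 q1 p2 q2 : ℕ) (hp1 : 2 ≤ p1) (hp2 : 2 ≤ p2) (hq1 : 0 < q1) (hq2 : 0 < q2)
    (hlt : p1 < q1) (hgcd1 : Nat.gcd p1 q1 = 1) (hgcd2 : Nat.gcd p2 q2 = 1) :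
    {n : ℕ | n ∉ AddSubmonoid.closure ({p1 * p2, q1 * p2, p1 * p2 * q1 + q2} : Set ℕ)}.Finite ∧
    {n : ℕ | n ∉ AddSubmonoid.closure ({p1 * p2, q1 * p2, p1 * p2 * q1 + q2} : Set ℕ)}.ncard =
      (p1 * q1 * p2 ^ 2 + p2 * q2 - p1 * p2 - q1 * p2 - q2 + 1) / 2 :=
  delta_invariant_of_two_newton_pairs_general p1 q1 p2 q2 hp1 hp2 hgcd1 hgcd2
end

section
/- Let p1, p2, q1, q2 be positive integers with p1 ≥ 2, p2 ≥ 2, p1 < q1, gcd(p1,q1) = 1 and gcd(p2,q2) = 1. Let Γ be the additive submonoid of ℕ generated by g0 = p1·p2, g1 = q1·p2 and g2 = p1·p2·q1 + q2, and set δ = (p1·q1·p2² + p2·q2 − p1·p2 − q1·p2 − q2 + 1)/2. Then the largest element of ℕ \ Γ equals 2δ − 1; that is, 2δ − 1 ∉ Γ and every integer n ≥ 2δ belongs to Γ. -/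
/-!
`Γ` is the gluing `p2 · ⟨p1, q1⟩ + ℕ · g2` of Sylvester's semigroup `S = ⟨p1, q1⟩`, whose Frobenius
number is `p1 q1 - p1 - q1`. For a gluing `d · S + ℕ c` with `c ∈ S` and `gcd(d, c) = 1`, the relation
`d c ∈ d · S` lets one write every element as `m d + z c` with `m ∈ S` and `z < d`, and `z` is then
determined by `n` modulo `d`. Hence the Frobenius number of the gluing is `d F(S) + (d - 1) c`, which
here equals `2δ - 1` since the numerator defining `δ` is odd.
-/

open Nat

theorem Nat.exists_lt_mul_modEq {c d : ℕ} (n : ℕ) (hd : 0 < d) (hcd : Coprime c d) :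
    ∃ z < d, z * c ≡ n [MOD d] := by
  have : NeZero d := ⟨hd.ne'⟩
  refine ⟨((n : ZMod d) * (c : ZMod d)⁻¹).val, ZMod.val_lt _, ?_⟩
  rw [← ZMod.natCast_eq_natCast_iff]
  push_cast
  rw [ZMod.natCast_val, ZMod.cast_id, mul_assoc, mul_comm _ (c : ZMod d),
    ZMod.coe_mul_inv_eq_one c hcd, mul_one]

theorem mem_closure_image_mul_right_union_singleton {s : Set ℕ} {d c n : ℕ} :
    n ∈ AddSubmonoid.closure ((· * d) '' s ∪ {c}) ↔
      ∃ m ∈ AddSubmonoid.closure s, ∃ z, m * d + z * c = n := by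
  have hmap : AddSubmonoid.closure ((· * d) '' s) =
      (AddSubmonoid.closure s).map (AddMonoidHom.mulRight d) :=
    (AddMonoidHom.map_mclosure (AddMonoidHom.mulRight d) s).symm
  rw [AddSubmonoid.closure_union, hmap, AddSubmonoid.mem_sup]
  simp [AddSubmonoid.mem_closure_singleton]

theorem exists_lt_of_mem_closure_image_mul_right_union_singleton {s : Set ℕ} {d c n : ℕ}
    (hd : 0 < d) (hc : c ∈ AddSubmonoid.closure s)
    (hn : n ∈ AddSubmonoid.closure ((· * d) '' s ∪ {c})) :
    ∃ m ∈ AddSubmonoid.closure s, ∃ z < d, m * d + z * c = n := by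
  obtain ⟨m, hm, z, rfl⟩ := mem_closure_image_mul_right_union_singleton.mp hn
  refine ⟨m + z / d * c, add_mem hm (AddSubmonoid.nsmul_mem _ hc _), z % d, mod_lt z hd, ?_⟩
  conv_rhs => rw [← Nat.div_add_mod z d]
  ring

/-- Delorme's gluing of numerical semigroups. -/
theorem FrobeniusNumber.gluing {s : Set ℕ} {f d c : ℕ} (hf : FrobeniusNumber f s) (hd : 0 < d)
    (hc : c ∈ AddSubmonoid.closure s) (hdc : Coprime d c) :
    FrobeniusNumber (f * d + (d - 1) * c) ((· * d) '' s ∪ {c}) := by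
  rw [frobeniusNumber_iff] at hf ⊢
  constructor
  · intro hmem
    obtain ⟨m, hm, z, hz, hsum⟩ :=
      exists_lt_of_mem_closure_image_mul_right_union_singleton hd hc hmem
    have hzc : z * c ≡ (d - 1) * c [MOD d] := by
      simpa [ModEq, mul_comm _ d, Nat.mul_add_mod] using congrArg (· % d) hsum
    obtain rfl : z = d - 1 := (hzc.cancel_right_of_coprime hdc).eq_of_lt_of_lt hz (by omega)
    obtain rfl : m = f := Nat.eq_of_mul_eq_mul_right hd (by omega)
    exact hf.1 hm
  · intro n hn
    obtain ⟨z, hz, hzn⟩ := exists_lt_mul_modEq n hd hdc.symm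
    have hzc : z * c ≤ (d - 1) * c := Nat.mul_le_mul_right c (by omega)
    obtain ⟨m, hm⟩ : d ∣ n - z * c := (Nat.modEq_iff_dvd' (by omega)).mp hzn
    have hfm : f < m := by
      refine lt_of_mul_lt_mul_right (a := d) ?_ d.zero_le
      rw [mul_comm m, ← hm]
      omega
    exact mem_closure_image_mul_right_union_singleton.mpr
      ⟨m, hf.2 m hfm, z, by rw [mul_comm m, ← hm]; omega⟩

theorem Nat.odd_mul_sub_sub_of_coprime {m n : ℕ} (hm : 1 < m) (hn : 1 < n) (h : Coprime m n) :
    Odd (m * n - m - n) := by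
  have hsucc : m * n - m - n + 1 = (m - 1) * (n - 1) := by
    rw [Nat.sub_sub]
    zify [Nat.add_le_mul hm hn, hm.le, hn.le]
    ring
  rw [← Nat.not_even_iff_odd, ← Nat.even_add_one, hsucc, Nat.even_mul]
  rcases Nat.even_or_odd m with hm2 | hm2
  · exact Or.inr (Nat.Odd.sub_odd (h.coprime_dvd_left hm2.two_dvd).odd_of_left odd_one)
  · exact Or.inl (Nat.Odd.sub_odd hm2 odd_one)

theorem two_mul_delta_sub_one_eq {p1 q1 p2 q2 δ : ℕ} (hp1 : 1 < p1) (hq1 : 1 < q1) (hp2 : 0 < p2)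
    (hcop1 : Coprime p1 q1) (hcop2 : Coprime p2 q2)
    (hδ : δ = (p1 * q1 * p2 ^ 2 + p2 * q2 - p1 * p2 - q1 * p2 - q2 + 1) / 2) :
    2 * δ - 1 = (p1 * q1 - p1 - q1) * p2 + (p2 - 1) * (p1 * p2 * q1 + q2) := by
  have hN : p1 * q1 * p2 ^ 2 + p2 * q2 - p1 * p2 - q1 * p2 - q2 =
      (p1 * q1 - p1 - q1) * p2 + (p2 - 1) * (p1 * p2 * q1 + q2) := by
    have h1 := Nat.add_le_mul hp1 hq1
    have h2 : p1 * p2 + q1 * p2 + q2 ≤ p1 * q1 * p2 ^ 2 + p2 * q2 := by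
      have : (p1 + q1) * p2 ≤ p1 * q1 * p2 ^ 2 :=
        calc (p1 + q1) * p2 ≤ p1 * q1 * p2 := Nat.mul_le_mul_right p2 h1
          _ ≤ p1 * q1 * p2 ^ 2 := Nat.mul_le_mul_left _ (Nat.le_self_pow two_ne_zero p2)
      nlinarith
    simp only [Nat.sub_sub]
    zify [h1, h2, hp2]
    ring
  have hodd : Odd ((p1 * q1 - p1 - q1) * p2 + (p2 - 1) * (p1 * p2 * q1 + q2)) := by
    have hF := Nat.odd_mul_sub_sub_of_coprime hp1 hq1 hcop1
    rcases Nat.even_or_odd p2 with hp2e | hp2o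
    · have hq2 : Odd q2 := (hcop2.coprime_dvd_left hp2e.two_dvd).odd_of_left
      exact (hp2e.mul_left _).add_odd
        ((Nat.Even.sub_odd hp2 hp2e odd_one).mul (((hp2e.mul_left p1).mul_right q1).add_odd hq2))
    · exact (hF.mul hp2o).add_even ((Nat.Odd.sub_odd hp2o odd_one).mul_right _)
  obtain ⟨k, hk⟩ := hodd
  rw [← hN] at hk
  omega

theorem frobenius_of_two_newton_pairs_general
    (p1 q1 p2 q2 : ℕ) (hp1 : 2 ≤ p1) (hp2 : 2 ≤ p2)
    (hlt : p1 < q1) (hgcd1 : Nat.gcd p1 q1 = 1) (hgcd2 : Nat.gcd p2 q2 = 1)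
    (δ : ℕ) (hδ : δ = (p1 * q1 * p2 ^ 2 + p2 * q2 - p1 * p2 - q1 * p2 - q2 + 1) / 2) :
    2 * δ - 1 ∉ AddSubmonoid.closure ({p1 * p2, q1 * p2, p1 * p2 * q1 + q2} : Set ℕ) ∧
    ∀ n : ℕ, 2 * δ ≤ n →
      n ∈ AddSubmonoid.closure ({p1 * p2, q1 * p2, p1 * p2 * q1 + q2} : Set ℕ) := by
  have hq1 : 1 < q1 := by omega
  have hS := frobeniusNumber_pair hgcd1 hp1 hq1
  have hc : p1 * p2 * q1 + q2 ∈ AddSubmonoid.closure {p1, q1} := by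
    have hpos : 0 < p1 * q1 := Nat.mul_pos (by omega) (by omega)
    refine (frobeniusNumber_iff.mp hS).2 _ ?_
    calc p1 * q1 - p1 - q1 < p1 * q1 := by omega
      _ ≤ p1 * p2 * q1 := Nat.mul_le_mul_right q1 (Nat.le_mul_of_pos_right p1 (by omega))
      _ ≤ p1 * p2 * q1 + q2 := Nat.le_add_right _ _
  have hcop : Coprime p2 (p1 * p2 * q1 + q2) := by
    simpa [mul_right_comm] using (Nat.coprime_mul_right_add_right p2 q2 (p1 * q1)).mpr hgcd2
  have hΓ := frobeniusNumber_iff.mp (hS.gluing (by omega) hc hcop)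
  rw [Set.image_pair, Set.insert_union, Set.singleton_union,
    ← two_mul_delta_sub_one_eq hp1 hq1 (by omega) hgcd1 hgcd2 hδ] at hΓ
  have hpos : 2 * δ - 1 ≠ 0 := fun h => hΓ.1 (h ▸ zero_mem _)
  exact ⟨hΓ.1, fun n hn => hΓ.2 n (by omega)⟩

/-- For a plane curve singularity with two Newton pairs `(p1,q1)(p2,q2)` with semigroup
`Γ = ⟨p1·p2, q1·p2, p1·p2·q1 + q2⟩` and delta invariant
`δ = (p1·q1·p2² + p2·q2 − p1·p2 − q1·p2 − q2 + 1)/2`, the largest element of `ℕ \ Γ` is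
`2δ − 1`: that element is not in `Γ`, and every `n ≥ 2δ` is in `Γ`. -/
theorem frobenius_of_two_newton_pairs
    (p1 q1 p2 q2 : ℕ) (hp1 : 2 ≤ p1) (hp2 : 2 ≤ p2) (hq1 : 0 < q1) (hq2 : 0 < q2)
    (hlt : p1 < q1) (hgcd1 : Nat.gcd p1 q1 = 1) (hgcd2 : Nat.gcd p2 q2 = 1)
    (δ : ℕ) (hδ : δ = (p1 * q1 * p2 ^ 2 + p2 * q2 - p1 * p2 - q1 * p2 - q2 + 1) / 2) :
    2 * δ - 1 ∉ AddSubmonoid.closure ({p1 * p2, q1 * p2, p1 * p2 * q1 + q2} : Set ℕ) ∧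
    ∀ n : ℕ, 2 * δ ≤ n →
      n ∈ AddSubmonoid.closure ({p1 * p2, q1 * p2, p1 * p2 * q1 + q2} : Set ℕ) :=
  frobenius_of_two_newton_pairs_general p1 q1 p2 q2 hp1 hp2 hlt hgcd1 hgcd2 δ hδ
end

section
/- Fix integers n ≥ 3 and m ≥ 2, and set d = n·m. Let Γ be the additive submonoid of ℕ generated by g0 = (n−1)·m, g1 = n·m and g2 = n²·m − 1 (the semigroup of the singularity of type (n−1, n)(m, nm−1)), and let R(n') = #(Γ ∩ [0,n']). Then R(j·d) = (j+1)(j+2)/2 for every integer j with 0 ≤ j ≤ d−3. -/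
/-! Let `g₀ = (n-1)m`, `g₁ = nm`, `g₂ = n²m - 1`. The relations `n g₀ = (n-1) g₁` and
`m g₂ = g₀ + (nm-1) g₁` bring every element of the semigroup to the form `α g₀ + β g₁ + γ g₂`
with `α < n`, `γ < m`. With `u = nγ + α` this element equals `nm (u + β) - (mα + γ)`, and
`u ↦ mα + γ` permutes `[0, nm)`. So the element determines `(u, β)`, and it is at most `j·nm`
exactly when `u + β ≤ j`. For `j < nm` the elements of the semigroup in `[0, j·nm]` are thus in
bijection with the lattice points of the triangle `u + β ≤ j`, of which there are
`(j+1)(j+2)/2`. -/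

open Finset in
theorem ncard_setOf_fst_add_snd_le (j : ℕ) :
    {p : ℕ × ℕ | p.1 + p.2 ≤ j}.ncard = (j + 1) * (j + 2) / 2 := by
  have h : {p : ℕ × ℕ | p.1 + p.2 ≤ j} = ↑((range (j + 1)).biUnion antidiagonal) := by
    ext p
    simp
  have hdisj : (↑(range (j + 1)) : Set ℕ).PairwiseDisjoint antidiagonal :=
    fun s _ t _ hst => disjoint_left.2 fun p hs ht =>
      hst ((mem_antidiagonal.1 hs).symm.trans (mem_antidiagonal.1 ht))
  rw [h, Set.ncard_coe_finset, card_biUnion hdisj]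
  simp only [Nat.card_antidiagonal]
  have := sum_range_id (j + 2)
  rw [sum_range_succ'] at this
  rw [Nat.mul_comm (j + 1)]
  simpa using this

theorem AddSubmonoid.exists_of_mem_closure_triple {M : Type*} [AddCommMonoid M] {a b c x : M}
    (hx : x ∈ AddSubmonoid.closure ({a, b, c} : Set M)) :
    ∃ i j k : ℕ, x = i • a + j • b + k • c := by
  induction hx using AddSubmonoid.closure_induction with
  | mem y hy =>
    rcases hy with rfl | rfl | rfl
    · exact ⟨1, 0, 0, by simp⟩
    · exact ⟨0, 1, 0, by simp⟩
    · exact ⟨0, 0, 1, by simp⟩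
  | zero => exact ⟨0, 0, 0, by simp⟩
  | add x y _ _ ihx ihy =>
    obtain ⟨i, j, k, rfl⟩ := ihx
    obtain ⟨i', j', k', rfl⟩ := ihy
    exact ⟨i + i', j + j', k + k', by simp only [add_nsmul]; abel⟩

theorem Nat.eq_and_eq_of_add_eq_mul {N x r r' s t : ℕ} (hr : r < N) (hr' : r' < N)
    (h : x + r = s * N) (h' : x + r' = t * N) : s = t ∧ r = r' := by
  have le_of : ∀ {a b e f : ℕ}, f < N → x + e = a * N → x + f = b * N → b ≤ a :=
    fun hf ha hb => Nat.lt_succ_iff.1 <| Nat.lt_of_mul_lt_mul_right (a := N) <| by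
      rw [Nat.succ_mul]; omega
  have hst : s = t := le_antisymm (le_of hr h' h) (le_of hr' h h')
  subst hst
  omega

namespace FamilyIII

def semigroup (n m : ℕ) : AddSubmonoid ℕ :=
  AddSubmonoid.closure {(n - 1) * m, n * m, n ^ 2 * m - 1}

/-- Writing `u = n * γ + α` with `α < n`, this is `m * α + γ`: the two mixed-radix digits of `u`
read in the other order. -/
def digitSwap (n m u : ℕ) : ℕ := m * (u % n) + u / n

/-- Writing `u = n * γ + α` with `α < n`, the pair `(u, β)` stands for the element
`α g₀ + β g₁ + γ g₂` of the semigroup. -/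
def param (n m : ℕ) (p : ℕ × ℕ) : ℕ :=
  (p.1 % n) * ((n - 1) * m) + p.2 * (n * m) + (p.1 / n) * (n ^ 2 * m - 1)

variable {n m : ℕ}

theorem digitSwap_lt {u : ℕ} (hu : u < n * m) : digitSwap n m u < n * m := by
  obtain ⟨hn, -⟩ := CanonicallyOrderedAdd.mul_pos.1 (Nat.zero_lt_of_lt hu)
  have hdiv : u / n < m := (Nat.div_lt_iff_lt_mul hn).2 (by rwa [mul_comm])
  have hmod : u % n + 1 ≤ n := Nat.mod_lt u hn
  calc m * (u % n) + u / n < m * (u % n + 1) := by rw [mul_add_one]; omega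
    _ ≤ n * m := by rw [mul_comm n]; exact Nat.mul_le_mul_left m hmod

theorem digitSwap_injOn : Set.InjOn (digitSwap n m) (Set.Iio (n * m)) := by
  intro u hu v hv h
  obtain ⟨hn, hm⟩ := CanonicallyOrderedAdd.mul_pos.1 (Nat.zero_lt_of_lt hu)
  have digits : ∀ w ∈ Set.Iio (n * m),
      digitSwap n m w / m = w % n ∧ digitSwap n m w % m = w / n :=
    fun w hw => (Nat.div_mod_unique hm).2
      ⟨by rw [digitSwap, add_comm], (Nat.div_lt_iff_lt_mul hn).2 (by rw [mul_comm]; exact hw)⟩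
  rw [← Nat.mod_add_div u n, ← Nat.mod_add_div v n, ← (digits u hu).1, ← (digits u hu).2,
    ← (digits v hv).1, ← (digits v hv).2, h]

theorem param_mem (p : ℕ × ℕ) : param n m p ∈ semigroup n m := by
  have mul_mem : ∀ k g, g ∈ ({(n - 1) * m, n * m, n ^ 2 * m - 1} : Set ℕ) →
      k * g ∈ semigroup n m := fun k g hg => by
    rw [← smul_eq_mul]
    exact nsmul_mem (AddSubmonoid.subset_closure hg) k
  exact add_mem (add_mem (mul_mem _ _ (by simp)) (mul_mem _ _ (by simp))) (mul_mem _ _ (by simp))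

section

variable (hn : 0 < n) (hm : 0 < m)
include hn hm

theorem exists_normal_form {x : ℕ} (hx : x ∈ semigroup n m) :
    ∃ α β γ, α < n ∧ γ < m ∧ x = α * ((n - 1) * m) + β * (n * m) + γ * (n ^ 2 * m - 1) := by
  obtain ⟨a, b, c, rfl⟩ := AddSubmonoid.exists_of_mem_closure_triple hx
  obtain ⟨q, γ, hγ, rfl⟩ : ∃ q γ, γ < m ∧ c = m * q + γ :=
    ⟨c / m, c % m, Nat.mod_lt _ hm, (Nat.div_add_mod c m).symm⟩
  obtain ⟨q', α, hα, hq⟩ : ∃ q' α, α < n ∧ a + q = n * q' + α :=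
    ⟨(a + q) / n, (a + q) % n, Nat.mod_lt _ hn, (Nat.div_add_mod (a + q) n).symm⟩
  refine ⟨α, b + q * (n * m - 1) + q' * (n - 1), γ, hα, hγ, ?_⟩
  have hq : (a : ℤ) + q = n * q' + α := by exact_mod_cast hq
  have hnm : 1 ≤ n * m := Nat.mul_pos hn hm
  have hn2m : 1 ≤ n ^ 2 * m := Nat.mul_pos (pow_pos hn 2) hm
  simp only [smul_eq_mul]
  zify [hn, hnm, hn2m]
  linear_combination (((n : ℤ) - 1) * m) * hq

theorem exists_param_eq {x : ℕ} (hx : x ∈ semigroup n m) :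
    ∃ p : ℕ × ℕ, p.1 < n * m ∧ param n m p = x := by
  obtain ⟨α, β, γ, hα, hγ, rfl⟩ := exists_normal_form hn hm hx
  refine ⟨(n * γ + α, β), ?_, ?_⟩
  · calc n * γ + α < n * (γ + 1) := by rw [mul_add_one]; omega
      _ ≤ n * m := Nat.mul_le_mul_left n hγ
  · simp only [param, Nat.mul_add_mod, Nat.mul_add_div hn, Nat.mod_eq_of_lt hα,
      Nat.div_eq_of_lt hα, add_zero]

theorem param_add_digitSwap (p : ℕ × ℕ) :
    param n m p + digitSwap n m p.1 = (p.1 + p.2) * (n * m) := by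
  obtain ⟨u, β⟩ := p
  have hn2m : 1 ≤ n ^ 2 * m := Nat.mul_pos (pow_pos hn 2) hm
  have hu : u % n + n * (u / n) = u := Nat.mod_add_div u n
  simp only [param, digitSwap]
  generalize u % n = α, u / n = γ at hu ⊢
  subst hu
  zify [hn, hn2m]
  ring

theorem param_le_iff {p : ℕ × ℕ} (hp : p.1 < n * m) {j : ℕ} :
    param n m p ≤ j * (n * m) ↔ p.1 + p.2 ≤ j := by
  have hsum := param_add_digitSwap hn hm p
  have hlt := digitSwap_lt hp
  constructor
  · intro h
    by_contra! hj
    have := Nat.mul_le_mul_right (n * m) hj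
    rw [Nat.succ_mul] at this
    omega
  · intro h
    have := Nat.mul_le_mul_right (n * m) h
    omega

theorem param_injOn : Set.InjOn (param n m) {p | p.1 < n * m} := by
  rintro ⟨u, β⟩ hu ⟨v, β'⟩ hv h
  obtain ⟨hs, hswap⟩ := Nat.eq_and_eq_of_add_eq_mul (digitSwap_lt hu) (digitSwap_lt hv)
    (param_add_digitSwap hn hm (u, β)) (h ▸ param_add_digitSwap hn hm (v, β'))
  have huv : u = v := digitSwap_injOn hu hv hswap
  simp only at hs
  simp only [Prod.mk.injEq]
  omega

end

theorem setOf_mem_semigroup_le_eq_image {j : ℕ} (hj : j < n * m) :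
    {x | x ∈ semigroup n m ∧ x ≤ j * (n * m)} = param n m '' {p | p.1 + p.2 ≤ j} := by
  obtain ⟨hn, hm⟩ := CanonicallyOrderedAdd.mul_pos.1 (Nat.zero_lt_of_lt hj)
  ext x
  constructor
  · rintro ⟨hx, hle⟩
    obtain ⟨p, hp, rfl⟩ := exists_param_eq hn hm hx
    exact ⟨p, (param_le_iff hn hm hp).1 hle, rfl⟩
  · rintro ⟨p, hp : p.1 + p.2 ≤ j, rfl⟩
    exact ⟨param_mem p, (param_le_iff hn hm (by omega)).2 hp⟩

theorem ncard_setOf_mem_semigroup_le {j : ℕ} (hj : j < n * m) :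
    {x | x ∈ semigroup n m ∧ x ≤ j * (n * m)}.ncard = (j + 1) * (j + 2) / 2 := by
  obtain ⟨hn, hm⟩ := CanonicallyOrderedAdd.mul_pos.1 (Nat.zero_lt_of_lt hj)
  have hsub : {p : ℕ × ℕ | p.1 + p.2 ≤ j} ⊆ {p | p.1 < n * m} :=
    fun p (hp : p.1 + p.2 ≤ j) => show p.1 < n * m by omega
  rw [setOf_mem_semigroup_le_eq_image hj, ((param_injOn hn hm).mono hsub).ncard_image,
    ncard_setOf_fst_add_snd_le]

end FamilyIII

/-- Family (iii): for `n ≥ 3`, `m ≥ 2` and `d = n·m`, the semigroup generated by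
`(n−1)·m`, `n·m`, `n²·m − 1` (singularity of type `(n−1,n)(m,nm−1)`) satisfies the
Borodzik–Livingston counting condition `R(j·d) = (j+1)(j+2)/2` for `0 ≤ j ≤ d−3`. -/
theorem counting_condition_family_iii
    (n m d : ℕ) (hn : 3 ≤ n) (hm : 2 ≤ m) (hd : d = n * m) :
    ∀ j : ℕ, j ≤ d - 3 →
      {x : ℕ | x ∈ AddSubmonoid.closure ({(n - 1) * m, n * m, n ^ 2 * m - 1} : Set ℕ) ∧
        x ≤ j * d}.ncard = (j + 1) * (j + 2) / 2 := by
  intro j hj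
  subst hd
  have : 3 * 2 ≤ n * m := Nat.mul_le_mul hn hm
  exact FamilyIII.ncard_setOf_mem_semigroup_le (by omega)
end

section
/- For all integers k ≥ 2 and l ≥ 0, gcd(l·F(2k−1)² + F(2k−3)², l·F(2k+1)² + F(2k−1)² + 2) = 1. (This guarantees that the first Newton pair (p1, q1) = (l·F(2k−1)² + F(2k−3)², l·F(2k+1)² + F(2k−1)² + 2) of families (i) and (ii) of the classification is a valid Newton pair.) -/
/-
Write `b, a, c` for `F(2k−3), F(2k−1), F(2k+1)`. Catalan's identity for the odd index `2k−3`
gives `b c = a² + 1`, and then the explicit Bézout relation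
`c² (l a² + b²) − a² (l c² + a² + 2) = (b c)² − (a² + 1)² = 1` shows that the two entries are coprime.
-/

theorem Nat.fib_mul_fib_add_four_of_odd {n : ℕ} (hn : Odd n) :
    fib n * fib (n + 4) = fib (n + 2) ^ 2 + 1 := by
  have catalan := Int.fib_add_sq_sub_fib_mul_fib_add_two_mul n 2
  simp only [Int.natAbs_natCast, hn.neg_one_pow, Int.fib_two] at catalan
  rw [show (n : ℤ) + 2 * 2 = (n + 4 : ℕ) by push_cast; ring, ← Nat.cast_ofNat, ← Nat.cast_add,
    Int.fib_natCast, Int.fib_natCast, Int.fib_natCast] at catalan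
  zify
  linear_combination -catalan

theorem Nat.coprime_sq_add_sq_of_mul_eq_sq_add_one {a b c : ℕ} (h : b * c = a ^ 2 + 1) (l : ℕ) :
    Coprime (l * a ^ 2 + b ^ 2) (l * c ^ 2 + a ^ 2 + 2) := by
  rw [← isCoprime_iff_coprime]
  have h' : (b * c : ℤ) = a ^ 2 + 1 := by exact_mod_cast h
  exact ⟨c ^ 2, -a ^ 2, by push_cast; linear_combination (b * c + a ^ 2 + 1 : ℤ) * h'⟩

/-- For all `k ≥ 2` and `l ≥ 0`, the entries of the first Newton pair
`(l·F(2k−1)² + F(2k−3)², l·F(2k+1)² + F(2k−1)² + 2)` of families (i) and (ii) are coprime. -/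
theorem gcd_first_newton_pair (k l : ℕ) (hk : 2 ≤ k) :
    Nat.gcd (l * (Nat.fib (2 * k - 1)) ^ 2 + (Nat.fib (2 * k - 3)) ^ 2)
      (l * (Nat.fib (2 * k + 1)) ^ 2 + (Nat.fib (2 * k - 1)) ^ 2 + 2) = 1 := by
  have hodd : Odd (2 * k - 3) := ⟨k - 2, by omega⟩
  rw [show 2 * k - 1 = 2 * k - 3 + 2 by omega, show 2 * k + 1 = 2 * k - 3 + 4 by omega]
  exact Nat.coprime_sq_add_sq_of_mul_eq_sq_add_one (Nat.fib_mul_fib_add_four_of_odd hodd) l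
end

section
/- Fix integers k ≥ 2 and l ≥ 0, and set p1 = l·F(2k−1)² + F(2k−3)², q1 = l·F(2k+1)² + F(2k−1)² + 2, p2 = F(2k−1)², q2 = p1, and d = F(2k−1)·F(2k+1)·p1. Then the degree–genus relation holds: (d−1)·(d−2) = p1·q1·p2² + p2·q2 − p1·p2 − q1·p2 − q2 + 1. -/
/-!
Write `A, B, C` for `F(2k−3), F(2k−1), F(2k+1)`. Catalan's identity gives `A·C = B² + 1`, and
Cassini's identity makes `(1, B, C)` a Markov triple: `B² + C² + 1 = 3·B·C`. The first gives
`B²·q1 = C²·p1 − 1`, which collapses the right-hand side to `d² − p1·(B² + C² + 1) + 2`; the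
Markov equation turns this into `d² − 3d + 2`.
-/

theorem Nat.fib_mul_fib_add_four (n : ℕ) :
    (fib n : ℤ) * fib (n + 4) = fib (n + 2) ^ 2 - (-1) ^ n := by
  have catalan := Int.fib_add_sq_sub_fib_mul_fib_add_two_mul n 2
  rw [show (2 : ℤ) * 2 = (4 : ℕ) by norm_num, ← Nat.cast_ofNat (n := 2), ← Nat.cast_add,
    ← Nat.cast_add, Int.natAbs_natCast] at catalan
  simp only [Int.fib_natCast, Nat.fib_two, Nat.cast_one, one_pow, mul_one] at catalan
  linear_combination -catalan

theorem Nat.fib_sq_add_fib_add_two_sq (n : ℕ) :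
    (fib n : ℤ) ^ 2 + fib (n + 2) ^ 2 = 3 * fib n * fib (n + 2) + (-1) ^ n := by
  have cassini := Int.fib_succ_mul_fib_pred_sub_fib_sq (n + 1 : ℕ)
  rw [Int.natAbs_natCast, Nat.cast_add_one, add_sub_cancel_right, ← Nat.cast_add_one,
    ← Nat.cast_add_one] at cassini
  simp only [Int.fib_natCast] at cassini
  have hrec : (fib (n + 2) : ℤ) = fib n + fib (n + 1) := mod_cast fib_add_two
  linear_combination -cassini + (fib (n + 2) - fib n + fib (n + 1) : ℤ) * hrec

theorem degree_genus_identity_of_markov {R : Type*} [CommRing R] {A B C l p₁ q₁ p₂ q₂ d : R}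
    (hprod : A * C = B ^ 2 + 1) (hmarkov : B ^ 2 + C ^ 2 + 1 = 3 * B * C)
    (hp₁ : p₁ = l * B ^ 2 + A ^ 2) (hq₁ : q₁ = l * C ^ 2 + B ^ 2 + 2) (hp₂ : p₂ = B ^ 2)
    (hq₂ : q₂ = p₁) (hd : d = B * C * p₁) :
    (d - 1) * (d - 2) = p₁ * q₁ * p₂ ^ 2 + p₂ * q₂ - p₁ * p₂ - q₁ * p₂ - q₂ + 1 := by
  have hp₂q₁ : p₂ * q₁ = C ^ 2 * p₁ - 1 := by
    subst p₁ q₁ p₂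
    linear_combination (-(A * C + B ^ 2 + 1)) * hprod
  subst p₂ q₂ d
  linear_combination (1 - p₁ * B ^ 2) * hp₂q₁ + p₁ * hmarkov

/-- The degree–genus relation for family (i): with `p1 = l·F(2k−1)² + F(2k−3)²`,
`q1 = l·F(2k+1)² + F(2k−1)² + 2`, `p2 = F(2k−1)²`, `q2 = p1`, and
`d = F(2k−1)·F(2k+1)·p1`, one has
`(d−1)(d−2) = p1·q1·p2² + p2·q2 − p1·p2 − q1·p2 − q2 + 1`. -/
theorem degree_genus_family_i
    (k l p1 q1 p2 q2 d : ℕ) (hk : 2 ≤ k)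
    (hp1 : p1 = l * (Nat.fib (2 * k - 1)) ^ 2 + (Nat.fib (2 * k - 3)) ^ 2)
    (hq1 : q1 = l * (Nat.fib (2 * k + 1)) ^ 2 + (Nat.fib (2 * k - 1)) ^ 2 + 2)
    (hp2 : p2 = (Nat.fib (2 * k - 1)) ^ 2)
    (hq2 : q2 = p1)
    (hd : d = Nat.fib (2 * k - 1) * Nat.fib (2 * k + 1) * p1) :
    ((d : ℤ) - 1) * ((d : ℤ) - 2) =
      (p1 : ℤ) * q1 * (p2 : ℤ) ^ 2 + (p2 : ℤ) * q2 - (p1 : ℤ) * p2 - (q1 : ℤ) * p2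
        - (q2 : ℤ) + 1 := by
  obtain ⟨n, hn, h₁, h₂, h₃⟩ :
      ∃ n, Odd n ∧ 2 * k - 3 = n ∧ 2 * k - 1 = n + 2 ∧ 2 * k + 1 = n + 4 :=
    ⟨2 * k - 3, ⟨k - 2, by omega⟩, rfl, by omega, by omega⟩
  simp only [h₁, h₂, h₃] at hp1 hq1 hp2 hd
  have hprod : (Nat.fib n : ℤ) * Nat.fib (n + 4) = Nat.fib (n + 2) ^ 2 + 1 := by
    rw [Nat.fib_mul_fib_add_four, hn.neg_one_pow, sub_neg_eq_add]
  have hmarkov : (Nat.fib (n + 2) : ℤ) ^ 2 + Nat.fib (n + 4) ^ 2 + 1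
      = 3 * Nat.fib (n + 2) * Nat.fib (n + 4) := by
    have h := Nat.fib_sq_add_fib_add_two_sq (n + 2)
    rw [(hn.add_even even_two).neg_one_pow] at h
    linear_combination h
  exact degree_genus_identity_of_markov (l := (l : ℤ)) hprod hmarkov (by exact_mod_cast hp1)
    (by exact_mod_cast hq1) (by exact_mod_cast hp2) (by exact_mod_cast hq2) (by exact_mod_cast hd)
end

section
/- Fix integers k ≥ 3 and l ≥ 0, and set p1 = l·F(2k−1)² + F(2k−3)², q1 = l·F(2k+1)² + F(2k−1)² + 2, p2 = F(2k−1), q2 = l·F(2k−1) + F(2k−5), and d = F(2k+1)·p1. Then the degree–genus relation holds: (d−1)·(d−2) = p1·q1·p2² + p2·q2 − p1·p2 − q1·p2 − q2 + 1. -/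
/-!
Put `x = F(2k−3)` and `y = F(2k−1)`. The recurrence `F(n+4) = 3F(n+2) − F(n)` gives
`F(2k−5) = 3x − y` and `F(2k+1) = 3y − x`, and Cassini's identity at index `2k−2` becomes
`x² − 3xy + y² = −1`, i.e. `(1, x, y)` is a Markov triple. Modulo this single relation both sides
of the degree–genus formula are the same polynomial in `x`, `y` and `l`.
-/

namespace Nat

theorem fib_add_fib_add_four (n : ℕ) : fib n + fib (n + 4) = 3 * fib (n + 2) := by
  have h2 : fib (n + 2) = fib n + fib (n + 1) := fib_add_two
  have h3 : fib (n + 3) = fib (n + 1) + fib (n + 2) := fib_add_two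
  have h4 : fib (n + 4) = fib (n + 2) + fib (n + 3) := fib_add_two
  omega

theorem fib_sq_sub_three_mul_add_fib_add_two_sq (n : ℕ) :
    (fib n : ℤ) ^ 2 - 3 * fib n * fib (n + 2) + (fib (n + 2) : ℤ) ^ 2 = (-1) ^ n := by
  have cassini := Int.fib_succ_mul_fib_pred_sub_fib_sq (n + 1)
  rw [show (n : ℤ) + 1 + 1 = ((n + 2 : ℕ) : ℤ) by push_cast; ring, add_sub_cancel_right,
    show (n : ℤ) + 1 = ((n + 1 : ℕ) : ℤ) by push_cast; ring] at cassini
  simp only [Int.fib_natCast, Int.natAbs_natCast] at cassini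
  have hmid : (fib (n + 1) : ℤ) = fib (n + 2) - fib n := by
    rw [fib_add_two]; push_cast; ring
  rw [hmid] at cassini
  linear_combination -cassini

end Nat

theorem degree_genus_of_markov_relation {R : Type*} [CommRing R] {w x y z l p1 q1 p2 q2 d : R}
    (hw : w + y = 3 * x) (hz : x + z = 3 * y) (hxy : x ^ 2 - 3 * x * y + y ^ 2 = -1)
    (hp1 : p1 = l * y ^ 2 + x ^ 2) (hq1 : q1 = l * z ^ 2 + y ^ 2 + 2) (hp2 : p2 = y)
    (hq2 : q2 = l * y + w) (hd : d = z * p1) :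
    (d - 1) * (d - 2) = p1 * q1 * p2 ^ 2 + p2 * q2 - p1 * p2 - q1 * p2 - q2 + 1 := by
  obtain rfl : w = 3 * x - y := eq_sub_of_add_eq hw
  obtain rfl : z = 3 * y - x := eq_sub_of_add_eq' hz
  subst p1 q1 p2 q2 d
  linear_combination (x ^ 4 - 3 * x ^ 3 * y + l * x ^ 2 * y ^ 2 - x ^ 2 * y ^ 2 - x ^ 2
    - 3 * l * x * y ^ 3 + 3 * x - l * y ^ 4 - l * y ^ 2 + l * y + y + 1) * hxy

/-- The degree–genus relation for family (ii): with `p1 = l·F(2k−1)² + F(2k−3)²`,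
`q1 = l·F(2k+1)² + F(2k−1)² + 2`, `p2 = F(2k−1)`, `q2 = l·F(2k−1) + F(2k−5)`, and
`d = F(2k+1)·p1`, one has
`(d−1)(d−2) = p1·q1·p2² + p2·q2 − p1·p2 − q1·p2 − q2 + 1`. -/
theorem degree_genus_family_ii
    (k l p1 q1 p2 q2 d : ℕ) (hk : 3 ≤ k)
    (hp1 : p1 = l * (Nat.fib (2 * k - 1)) ^ 2 + (Nat.fib (2 * k - 3)) ^ 2)
    (hq1 : q1 = l * (Nat.fib (2 * k + 1)) ^ 2 + (Nat.fib (2 * k - 1)) ^ 2 + 2)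
    (hp2 : p2 = Nat.fib (2 * k - 1))
    (hq2 : q2 = l * Nat.fib (2 * k - 1) + Nat.fib (2 * k - 5))
    (hd : d = Nat.fib (2 * k + 1) * p1) :
    ((d : ℤ) - 1) * ((d : ℤ) - 2) =
      (p1 : ℤ) * q1 * (p2 : ℤ) ^ 2 + (p2 : ℤ) * q2 - (p1 : ℤ) * p2 - (q1 : ℤ) * p2
        - (q2 : ℤ) + 1 := by
  set n := 2 * k - 5 with hn
  rw [show 2 * k - 3 = n + 2 by omega, show 2 * k - 1 = n + 4 by omega] at *
  rw [show 2 * k + 1 = n + 6 by omega] at hq1 hd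
  have hodd : Odd (n + 2) := ⟨k - 2, by omega⟩
  refine degree_genus_of_markov_relation (w := (Nat.fib n : ℤ)) (x := (Nat.fib (n + 2) : ℤ))
    (y := (Nat.fib (n + 4) : ℤ)) (z := (Nat.fib (n + 6) : ℤ)) (l := (l : ℤ)) ?_ ?_ ?_
    (by rw [hp1]; push_cast; ring) (by rw [hq1]; push_cast; ring) (by rw [hp2])
    (by rw [hq2]; push_cast; ring) (by rw [hd]; push_cast; ring)
  · exact_mod_cast Nat.fib_add_fib_add_four n
  · exact_mod_cast Nat.fib_add_fib_add_four (n + 2)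
  · rw [Nat.fib_sq_sub_three_mul_add_fib_add_two_sq, hodd.neg_one_pow]
end
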